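/- arXiv:1403.4696 — 2 statements merged into one kernel-verified Lean document; each statement's English description precedes it below -/
import Mathlib

section
/- Existence of the gap constant γ: under Assumption 1, for every initial vector x(0) ∈ ℝ^n there exists a real constant γ > 0 such that for every agent i and every time k ≥ 0 the following hold: (i) if c_i(k) > 1 − w_ii then c_i(k) − (1 − w_ii) ≥ 2γ; (ii) if 1 − c_i(k) > 1 − w_ii then (1 − c_i(k)) − (1 − w_ii) ≥ 2γ; (iii) 1 − c_i(k) ≥ 2γ; and (iv) 1/2 − (1 − w_ii) ≥ 2γ. -/
/-!
Off-diagonal weights are rational, so they have a common denominator `D`, and each update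
`x_i(k+1) - x_i(k) = ∑_j w_ij (⌊x_j(k)⌋ - ⌊x_i(k)⌋)` lies in `(1/D)ℤ`. Hence
`x_i(k) ∈ x_i(0) + (1/D)ℤ` for all `k`, and the fractional parts `c_i(k)` take only finitely
many values. The quantities in the four gap conditions then range over a finite set of reals,
and `2γ` can be taken to be the least positive one.
-/

open Finset Filter

/-- Assumption 1 on the weight matrix `W` relative to the graph `G`:
symmetric, nonnegative, rows sum to 1, diagonally dominant (`w_ii > 1/2`),
respects the communication graph, and rational weights in `(0,1)` on edges. -/
def Assumption1 {n : ℕ} (G : SimpleGraph (Fin n)) (W : Matrix (Fin n) (Fin n) ℝ) : Prop :=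
  (∀ i j, W i j = W j i) ∧
  (∀ i j, 0 ≤ W i j) ∧
  (∀ i, ∑ j, W i j = 1) ∧
  (∀ i, 1 / 2 < W i i) ∧
  (∀ i j, i ≠ j → ¬G.Adj i j → W i j = 0) ∧
  (∀ i j, G.Adj i j → (∃ q : ℚ, (q : ℝ) = W i j) ∧ 0 < W i j ∧ W i j < 1)

/-- The quantized system `x(k+1) = W ⌊x(k)⌋ + x(k) − ⌊x(k)⌋`, componentwise. -/
def Traj {n : ℕ} (W : Matrix (Fin n) (Fin n) ℝ) (x : ℕ → Fin n → ℝ) : Prop :=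
  ∀ k i, x (k + 1) i = (∑ j, W i j * (⌊x k j⌋ : ℝ)) + x k i - (⌊x k i⌋ : ℝ)

/-- `m(k) = min_i ⌊x_i(k)⌋`. -/
noncomputable def mfun {n : ℕ} (hn : 0 < n) (x : ℕ → Fin n → ℝ) (k : ℕ) : ℤ :=
  Finset.univ.inf' ⟨⟨0, hn⟩, Finset.mem_univ _⟩ fun i => ⌊x k i⌋

/-- `M(k) = max_i ⌊x_i(k)⌋`. -/
noncomputable def Mfun {n : ℕ} (hn : 0 < n) (x : ℕ → Fin n → ℝ) (k : ℕ) : ℤ :=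
  Finset.univ.sup' ⟨⟨0, hn⟩, Finset.mem_univ _⟩ fun i => ⌊x k i⌋

/-- The γ gap conditions (fractional part `c_i(k) = x_i(k) − ⌊x_i(k)⌋`). -/
def GammaSetup {n : ℕ} (W : Matrix (Fin n) (Fin n) ℝ) (x : ℕ → Fin n → ℝ) (γ : ℝ) : Prop :=
  0 < γ ∧
  ∀ i k,
    (x k i - (⌊x k i⌋ : ℝ) > 1 - W i i → x k i - (⌊x k i⌋ : ℝ) - (1 - W i i) ≥ 2 * γ) ∧
    (1 - (x k i - (⌊x k i⌋ : ℝ)) > 1 - W i i →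
      1 - (x k i - (⌊x k i⌋ : ℝ)) - (1 - W i i) ≥ 2 * γ) ∧
    1 - (x k i - (⌊x k i⌋ : ℝ)) ≥ 2 * γ ∧
    1 / 2 - (1 - W i i) ≥ 2 * γ

/-- `α_i = 1 − w_ii + γ`. -/
noncomputable def alpha {n : ℕ} (W : Matrix (Fin n) (Fin n) ℝ) (γ : ℝ) (i : Fin n) : ℝ :=
  1 - W i i + γ

/-- The Lyapunov function `V(k) = Σ_i max{|x_i(k) − m(k) − 1| − α_i, 0}`. -/
noncomputable def Vfun {n : ℕ} (hn : 0 < n) (W : Matrix (Fin n) (Fin n) ℝ) (γ : ℝ)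
    (x : ℕ → Fin n → ℝ) (k : ℕ) : ℝ :=
  ∑ i, max (|x k i - (mfun hn x k : ℝ) - 1| - alpha W γ i) 0

/-- `δ = min_{(p,q) ∈ E} w_pq`. -/
noncomputable def deltaMin {n : ℕ} (G : SimpleGraph (Fin n)) (W : Matrix (Fin n) (Fin n) ℝ) : ℝ :=
  sInf {r : ℝ | ∃ p q, G.Adj p q ∧ r = W p q}

open Classical in
/-- `T_s(k0,k)`: number of times `t ∈ [k0,k]` at which node `s` lies in `X1 ∪ X2`,
i.e. `x_s(t) < m(t) + 1`. -/
noncomputable def Tcount {n : ℕ} (hn : 0 < n) (x : ℕ → Fin n → ℝ) (s : Fin n)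
    (k0 k : ℕ) : ℕ :=
  ((Finset.Icc k0 k).filter fun t => x t s < (mfun hn x t : ℝ) + 1).card

theorem exists_nat_forall_mem_zmultiples_inv {K ι : Type*} [Field K] [CharZero K] [Fintype ι]
    (q : ι → ℚ) : ∃ D : ℕ, 0 < D ∧ ∀ j, (q j : K) ∈ AddSubgroup.zmultiples ((D : K)⁻¹) := by
  refine ⟨∏ j, (q j).den, Finset.prod_pos fun j _ => (q j).pos, fun j => ?_⟩
  obtain ⟨e, he⟩ : (q j).den ∣ ∏ j, (q j).den := Finset.dvd_prod_of_mem _ (Finset.mem_univ j)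
  have he0 : (e : K) ≠ 0 :=
    Nat.cast_ne_zero.2 (right_ne_zero_of_mul (he ▸ (Finset.prod_pos fun j _ => (q j).pos).ne'))
  refine AddSubgroup.mem_zmultiples_iff.2 ⟨(q j).num * e, ?_⟩
  rw [he, zsmul_eq_mul, Rat.cast_def]
  push_cast
  field_simp

theorem Set.Finite.exists_pos_le_of_pos {A : Set ℝ} (hA : A.Finite) :
    ∃ ε > 0, ∀ a ∈ A, 0 < a → ε ≤ a := by
  rcases (A ∩ Set.Ioi 0).eq_empty_or_nonempty with h | h
  · exact ⟨1, one_pos, fun a ha hpos => (Set.eq_empty_iff_forall_notMem.1 h a ⟨ha, hpos⟩).elim⟩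
  · obtain ⟨a₀, ⟨-, ha₀⟩, hmin⟩ := Set.exists_min_image _ id (hA.inter_of_left _) h
    exact ⟨a₀, ha₀, fun a ha hpos => hmin a ⟨ha, hpos⟩⟩

theorem finite_range_fract_add_zsmul_inv (a : ℝ) {D : ℕ} (hD : 0 < D) :
    (Set.range fun m : ℤ => Int.fract (a + m • (D : ℝ)⁻¹)).Finite := by
  refine ((Set.finite_Ico (0 : ℤ) D).image fun r : ℤ => Int.fract (a + r • (D : ℝ)⁻¹)).subset ?_
  rintro _ ⟨m, rfl⟩
  refine ⟨m % D, ⟨Int.emod_nonneg m (by omega), Int.emod_lt_of_pos m (by omega)⟩, ?_⟩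
  have hsplit : m • (D : ℝ)⁻¹ = (m % D : ℤ) • (D : ℝ)⁻¹ + (m / D : ℤ) := by
    conv_lhs => rw [← Int.emod_add_mul_ediv m D]
    simp only [zsmul_eq_mul]
    push_cast
    field_simp
  simp only [hsplit, ← add_assoc, Int.fract_add_intCast]

section Assumption1

variable {n : ℕ} {G : SimpleGraph (Fin n)} {W : Matrix (Fin n) (Fin n) ℝ}

theorem Assumption1.exists_rat_eq (hW : Assumption1 G W) {i j : Fin n} (hij : i ≠ j) :
    ∃ r : ℚ, (r : ℝ) = W i j := by
  obtain ⟨-, -, -, -, hzero, hedge⟩ := hW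
  by_cases hadj : G.Adj i j
  · exact (hedge i j hadj).1
  · exact ⟨0, by rw [hzero i j hij hadj, Rat.cast_zero]⟩

theorem Assumption1.exists_offDiag_mem_zmultiples (hW : Assumption1 G W) :
    ∃ D : ℕ, 0 < D ∧ ∀ i j, i ≠ j → W i j ∈ AddSubgroup.zmultiples ((D : ℝ)⁻¹) := by
  choose r hr using fun p : {p : Fin n × Fin n // p.1 ≠ p.2} => hW.exists_rat_eq p.2
  obtain ⟨D, hD, hmem⟩ := exists_nat_forall_mem_zmultiples_inv (K := ℝ) r
  exact ⟨D, hD, fun i j hij => hr ⟨(i, j), hij⟩ ▸ hmem _⟩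

end Assumption1

section Traj

variable {n : ℕ} {W : Matrix (Fin n) (Fin n) ℝ} {x : ℕ → Fin n → ℝ}

theorem Traj.succ_sub (hx : Traj W x) (hrow : ∀ i, ∑ j, W i j = 1) (k : ℕ) (i : Fin n) :
    x (k + 1) i - x k i = ∑ j, W i j * ((⌊x k j⌋ : ℝ) - ⌊x k i⌋) := by
  simp only [hx k i, mul_sub, Finset.sum_sub_distrib, ← Finset.sum_mul, hrow]
  ring

theorem Traj.sub_mem (hx : Traj W x) (hrow : ∀ i, ∑ j, W i j = 1) {L : AddSubgroup ℝ}
    (hL : ∀ i j, i ≠ j → W i j ∈ L) (k : ℕ) (i : Fin n) : x k i - x 0 i ∈ L := by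
  induction k with
  | zero => simp
  | succ k ih =>
    have hstep : x (k + 1) i - x k i ∈ L := by
      rw [hx.succ_sub hrow]
      refine L.sum_mem fun j _ => ?_
      by_cases hij : i = j
      · simp [hij]
      · have := L.zsmul_mem (hL i j hij) (⌊x k j⌋ - ⌊x k i⌋)
        rwa [zsmul_eq_mul, mul_comm, Int.cast_sub] at this
    simpa using L.add_mem hstep ih

theorem Traj.finite_range_fract (hx : Traj W x) (hrow : ∀ i, ∑ j, W i j = 1) {D : ℕ}
    (hD : 0 < D) (hL : ∀ i j, i ≠ j → W i j ∈ AddSubgroup.zmultiples ((D : ℝ)⁻¹)) (i : Fin n) :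
    (Set.range fun k => Int.fract (x k i)).Finite := by
  refine (finite_range_fract_add_zsmul_inv (x 0 i) hD).subset ?_
  rintro _ ⟨k, rfl⟩
  obtain ⟨m, hm⟩ := AddSubgroup.mem_zmultiples_iff.1 (hx.sub_mem hrow hL k i)
  exact ⟨m, by simp only [hm, add_sub_cancel]⟩

end Traj

theorem exists_gap_constant_general {n : ℕ}
    (G : SimpleGraph (Fin n))
    (W : Matrix (Fin n) (Fin n) ℝ) (hW : Assumption1 G W)
    (x : ℕ → Fin n → ℝ) (hx : Traj W x) :
    ∃ γ : ℝ, GammaSetup W x γ := by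
  obtain ⟨D, hD, hL⟩ := hW.exists_offDiag_mem_zmultiples
  obtain ⟨-, -, hrow, hdiag, -⟩ := hW
  set S : Set (ℝ × ℝ) := Set.range fun p : Fin n × ℕ => (W p.1 p.1, Int.fract (x p.2 p.1))
  have hS : S.Finite := by
    refine (Set.finite_iUnion fun i =>
      (hx.finite_range_fract hrow hD hL i).image fun c => (W i i, c)).subset ?_
    rintro _ ⟨⟨i, k⟩, rfl⟩
    exact Set.mem_iUnion.2 ⟨i, _, ⟨k, rfl⟩, rfl⟩
  obtain ⟨ε, hε, hA⟩ := (hS.biUnion fun p _ => Set.toFinite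
    {p.2 - (1 - p.1), 1 - p.2 - (1 - p.1), 1 - p.2, 1 / 2 - (1 - p.1)}).exists_pos_le_of_pos
  refine ⟨ε / 2, half_pos hε, fun i k => ?_⟩
  have hgap := fun a ha => hA a (Set.mem_biUnion ⟨(i, k), rfl⟩ ha)
  rw [mul_div_cancel₀ ε two_ne_zero]
  refine ⟨fun h => hgap _ (.inl rfl) (sub_pos.2 h), fun h => hgap _ (.inr (.inl rfl)) (sub_pos.2 h),
    hgap _ (.inr (.inr (.inl rfl))) (sub_pos.2 (Int.fract_lt_one _)),
    hgap _ (.inr (.inr (.inr rfl))) (by linarith [hdiag i])⟩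

/-- Existence of the gap constant `γ > 0` satisfying the four gap conditions. -/
theorem exists_gap_constant {n : ℕ} (hn : 1 < n)
    (G : SimpleGraph (Fin n)) (hG : G.Connected)
    (W : Matrix (Fin n) (Fin n) ℝ) (hW : Assumption1 G W)
    (x : ℕ → Fin n → ℝ) (hx : Traj W x) :
    ∃ γ : ℝ, GammaSetup W x γ :=
  exists_gap_constant_general G W hW x hx
end

section
/- Situation S1 forces a strict Lyapunov decrease: under Assumption 1 and the γ/α setup, suppose at time k that m(k+1) = m(k) and there is an edge (i,j) of G with x_i(k) > m(k) + 1 + α_i (i.e. i ∈ X4(k) ∪ X5(k) ∪ X6(k)) and x_j(k) < m(k) + 1 (i.e. j ∈ X1(k) ∪ X2(k)). Then V(k+1) − V(k) ≤ −min{γ, δ}, where δ = min over edges (p,q) of G of w_pq. -/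
open Finset Filter

/-!
Write `x_p(k) = m + z_p + c_p` with integer level `z_p ≥ 0` and fractional part `c_p`, and split
`z = h + 1 - b`, where `b` is the indicator of the bottom level `{z = 0}` and `h = (z - 1)⁺`.
Since `m` does not move, the new offset of node `p` from `m + 1` is `c_p + (W h)_p - (W b)_p`, and
`(W b)_p` lies in `[w_pp, 1]` at bottom nodes and in `[0, 1 - w_pp]` elsewhere. A case analysis on
`z_p` then shows that the `p`-th summand of `V` grows by at most `(W h)_p - h_p`. At `i` this
improves by `min{γ, w_ij}`: the bottom neighbour `j` gives `(W b)_i ≥ w_ij`, and the γ-gap keeps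
the offset of `i` at least `γ` above `α_i`. Summing, the terms `(W h)_p - h_p` cancel because `W`
is doubly stochastic.
-/

open Matrix

def excess (a t : ℝ) : ℝ := max (|t| - a) 0

section Excess

variable {a c r s t u μ : ℝ}

lemma abs_sub_le_excess (a t : ℝ) : |t| - a ≤ excess a t := le_max_left _ _

lemma excess_nonneg (a t : ℝ) : 0 ≤ excess a t := le_max_right _ _

lemma sub_le_excess (a t : ℝ) : t - a ≤ excess a t :=
  (sub_le_sub_right (le_abs_self t) a).trans (abs_sub_le_excess a t)

lemma excess_neg (a t : ℝ) : excess a (-t) = excess a t := by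
  rw [excess, abs_neg, excess]

lemma excess_add_le (a t : ℝ) (hu : 0 ≤ u) : excess a (t + u) ≤ excess a t + u := by
  have h := abs_add_le t u
  rw [abs_of_nonneg hu] at h
  exact max_le (by linarith [abs_sub_le_excess a t]) (by linarith [excess_nonneg a t])

lemma excess_add_le_of_nonpos (ht : t ≤ 0) (hu : 0 ≤ u) (hua : u ≤ a) :
    excess a (t + u) ≤ excess a t := by
  refine max_le ?_ (excess_nonneg a t)
  rcases abs_cases (t + u) with ⟨h, _⟩ | ⟨h, _⟩
  · linarith [excess_nonneg a t]
  · linarith [abs_of_nonpos ht, abs_sub_le_excess a t]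

lemma excess_sub_le (hsr : s ≤ r) (hμs : μ ≤ s) (haμ : a + μ ≤ r) :
    excess a (r - s) ≤ r - a - μ := by
  rw [excess, abs_of_nonneg (sub_nonneg.2 hsr)]
  exact max_le (by linarith) (by linarith)

lemma excess_step_le_of_bottom (hc : c ≤ 1) (hu : 0 ≤ u) (hs : s ≤ 1) (has : 1 - a ≤ s) :
    excess a (c + u - s) ≤ excess a (c - 1) + u := calc
  excess a (c + u - s) = excess a ((c - 1) + (1 - s) + u) := by ring_nf
  _ ≤ excess a ((c - 1) + (1 - s)) + u := excess_add_le a _ hu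
  _ ≤ excess a (c - 1) + u := by
    gcongr
    exact excess_add_le_of_nonpos (by linarith) (by linarith) (by linarith)

lemma excess_step_le_of_nonneg (hc : 0 ≤ c) (hu : 0 ≤ u) (hs : 0 ≤ s) (hsa : s ≤ a) :
    excess a (c + u - s) ≤ excess a c + u := calc
  excess a (c + u - s) = excess a (-(-c + s) + u) := by ring_nf
  _ ≤ excess a (-(-c + s)) + u := excess_add_le a _ hu
  _ ≤ excess a c + u := by
    rw [excess_neg, ← excess_neg a c]
    gcongr
    exact excess_add_le_of_nonpos (by linarith) hs hsa

end Excess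

section Stochastic

variable {ι : Type*} [Fintype ι] {M : Matrix ι ι ℝ} {v : ι → ℝ}

lemma mul_le_mulVec (hM : ∀ p q, 0 ≤ M p q) (hv : ∀ q, 0 ≤ v q) (p q : ι) :
    M p q * v q ≤ (M *ᵥ v) p :=
  single_le_sum (f := fun q => M p q * v q) (fun q _ => mul_nonneg (hM p q) (hv q)) (mem_univ q)

lemma mulVec_le_one_sub_mul [DecidableEq ι] (hM : M ∈ rowStochastic ℝ ι)
    (hv : ∀ q, v q ≤ 1) (p q : ι) :
    (M *ᵥ v) p ≤ 1 - M p q * (1 - v q) := by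
  have h := mul_le_mulVec (M := M) (v := 1 - v) (fun _ _ => nonneg_of_mem_rowStochastic hM)
    (fun q => sub_nonneg.2 (hv q)) p q
  rw [mulVec_sub, one_vecMul_of_mem_rowStochastic hM] at h
  simp only [Pi.sub_apply, Pi.one_apply] at h
  linarith

end Stochastic

section Levels

variable {ι : Type*} (z : ι → ℕ)

def bottomIndicator : ι → ℝ := fun q => if z q = 0 then 1 else 0

def overshoot : ι → ℝ := fun q => z q - 1 + bottomIndicator z q

variable {z} {q : ι}

lemma bottomIndicator_of_eq_zero (h : z q = 0) : bottomIndicator z q = 1 := if_pos h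

lemma bottomIndicator_of_ne_zero (h : z q ≠ 0) : bottomIndicator z q = 0 := if_neg h

lemma bottomIndicator_nonneg (q : ι) : 0 ≤ bottomIndicator z q := by
  unfold bottomIndicator; split_ifs <;> norm_num

lemma bottomIndicator_le_one (q : ι) : bottomIndicator z q ≤ 1 := by
  unfold bottomIndicator; split_ifs <;> norm_num

lemma overshoot_of_eq_zero (h : z q = 0) : overshoot z q = 0 := by
  simp [overshoot, bottomIndicator_of_eq_zero h, h]

lemma overshoot_of_ne_zero (h : z q ≠ 0) : overshoot z q = z q - 1 := by
  simp [overshoot, bottomIndicator_of_ne_zero h]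

lemma overshoot_nonneg (q : ι) : 0 ≤ overshoot z q := by
  by_cases h : z q = 0
  · exact (overshoot_of_eq_zero h).ge
  · rw [overshoot_of_ne_zero h, sub_nonneg]
    exact_mod_cast Nat.one_le_iff_ne_zero.2 h

lemma mulVec_natCast_eq [Fintype ι] [DecidableEq ι] {W : Matrix ι ι ℝ}
    (hW : W ∈ rowStochastic ℝ ι) (p : ι) :
    (W *ᵥ fun q => (z q : ℝ)) p =
      (W *ᵥ overshoot z) p + 1 - (W *ᵥ bottomIndicator z) p := by
  have hz : (fun q => (z q : ℝ)) = overshoot z + 1 - bottomIndicator z := by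
    ext q; simp only [overshoot, Pi.add_apply, Pi.sub_apply, Pi.one_apply]; ring
  rw [hz, mulVec_sub, mulVec_add, one_vecMul_of_mem_rowStochastic hW]
  rfl

end Levels

section Step

variable {ι : Type*} [Fintype ι] [DecidableEq ι] {W : Matrix ι ι ℝ} {z : ι → ℕ}
    {γ c : ℝ}

lemma excess_step_le (hW : W ∈ rowStochastic ℝ ι) (hγ : 0 ≤ γ) {p : ι}
    (hdiag : 1 / 2 + 2 * γ ≤ W p p) (hc0 : 0 ≤ c) (hc1 : c ≤ 1) :
    excess (1 - W p p + γ) (c + (W *ᵥ fun q => (z q : ℝ)) p - 1) ≤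
      excess (1 - W p p + γ) (z p + c - 1) + (W *ᵥ overshoot z) p - overshoot z p := by
  set a := 1 - W p p + γ
  set s := (W *ᵥ bottomIndicator z) p
  set u := (W *ᵥ overshoot z) p
  have hWnn : ∀ p q, 0 ≤ W p q := fun _ _ => nonneg_of_mem_rowStochastic hW
  have hu : W p p * overshoot z p ≤ u := mul_le_mulVec hWnn overshoot_nonneg p p
  have hs_ge : W p p * bottomIndicator z p ≤ s := mul_le_mulVec hWnn bottomIndicator_nonneg p p
  have hs_le : s ≤ 1 - W p p * (1 - bottomIndicator z p) :=
    mulVec_le_one_sub_mul hW bottomIndicator_le_one p p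
  rw [show c + (W *ᵥ fun q => (z q : ℝ)) p - 1 = c + u - s by rw [mulVec_natCast_eq hW]; ring]
  obtain h0 | h1 | h2 : z p = 0 ∨ z p = 1 ∨ 2 ≤ z p := by omega
  · simp only [bottomIndicator_of_eq_zero h0, overshoot_of_eq_zero h0, h0, Nat.cast_zero,
      mul_zero, mul_one, sub_self, sub_zero, zero_add] at hu hs_ge hs_le ⊢
    exact excess_step_le_of_bottom hc1 hu hs_le (by linarith)
  · have hz0 : z p ≠ 0 := by omega
    simp only [bottomIndicator_of_ne_zero hz0, overshoot_of_ne_zero hz0, h1, Nat.cast_one,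
      sub_self, add_sub_cancel_left, mul_zero, sub_zero] at hu hs_ge hs_le ⊢
    exact excess_step_le_of_nonneg hc0 hu hs_ge (by linarith)
  · have hz0 : z p ≠ 0 := by omega
    have hz : (2 : ℝ) ≤ z p := by exact_mod_cast h2
    rw [bottomIndicator_of_ne_zero hz0] at hs_ge hs_le
    rw [overshoot_of_ne_zero hz0] at hu ⊢
    have hwu : W p p ≤ u := by nlinarith
    have := excess_sub_le (a := a) (μ := 0) (show s ≤ c + u by linarith) (by linarith)
      (by linarith)
    linarith [sub_le_excess a (z p + c - 1)]

lemma excess_step_le_sub (hW : W ∈ rowStochastic ℝ ι) (hγ : 0 ≤ γ) {i j : ι}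
    (hdiag : 1 / 2 + 2 * γ ≤ W i i) (hc0 : 0 ≤ c) (hc1 : c < 1)
    (hi : 1 - W i i + γ + γ ≤ z i + c - 1) (hj : z j = 0) {μ : ℝ} (hμγ : μ ≤ γ)
    (hμ : μ ≤ W i j) :
    excess (1 - W i i + γ) (c + (W *ᵥ fun q => (z q : ℝ)) i - 1) ≤
      excess (1 - W i i + γ) (z i + c - 1) + (W *ᵥ overshoot z) i - overshoot z i - μ := by
  set a := 1 - W i i + γ
  set s := (W *ᵥ bottomIndicator z) i
  set u := (W *ᵥ overshoot z) i
  have hWnn : ∀ p q, 0 ≤ W p q := fun _ _ => nonneg_of_mem_rowStochastic hW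
  have hzi : z i ≠ 0 := by
    rintro h
    rw [h, Nat.cast_zero] at hi
    linarith [le_one_of_mem_rowStochastic hW (i := i) (j := i)]
  have hu : W i i * (z i - 1) ≤ u := by
    simpa [overshoot_of_ne_zero hzi] using mul_le_mulVec hWnn (overshoot_nonneg (z := z)) i i
  have hs_ge : W i j ≤ s := by
    simpa [bottomIndicator_of_eq_zero hj] using
      mul_le_mulVec hWnn (bottomIndicator_nonneg (z := z)) i j
  have hs_le : s ≤ 1 - W i i := by
    simpa [bottomIndicator_of_ne_zero hzi] using
      mulVec_le_one_sub_mul hW (bottomIndicator_le_one (z := z)) i i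
  have hcu : a + γ ≤ c + u := by
    obtain h1 | h2 : z i = 1 ∨ 2 ≤ z i := by omega
    · rw [h1, Nat.cast_one, sub_self, mul_zero] at hu
      rw [h1, Nat.cast_one] at hi
      linarith
    · have : (2 : ℝ) ≤ z i := by exact_mod_cast h2
      nlinarith
  rw [show c + (W *ᵥ fun q => (z q : ℝ)) i - 1 = c + u - s by rw [mulVec_natCast_eq hW]; ring,
    overshoot_of_ne_zero hzi]
  have := excess_sub_le (a := a) (show s ≤ c + u by linarith) (hμ.trans hs_ge) (by linarith)
  linarith [sub_le_excess a (z i + c - 1)]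

end Step

theorem sum_excess_step_le {ι : Type*} [Fintype ι] [DecidableEq ι] {W : Matrix ι ι ℝ}
    (hW : W ∈ doublyStochastic ℝ ι) {γ : ℝ} (hγ : 0 ≤ γ)
    (hdiag : ∀ p, 1 / 2 + 2 * γ ≤ W p p)
    {z : ι → ℕ} {c : ι → ℝ} (hc0 : ∀ p, 0 ≤ c p) (hc1 : ∀ p, c p < 1) {i j : ι}
    (hi : 1 - W i i + γ + γ ≤ z i + c i - 1) (hj : z j = 0) {μ : ℝ} (hμγ : μ ≤ γ)
    (hμ : μ ≤ W i j) :
    ∑ p, excess (1 - W p p + γ) (c p + (W *ᵥ fun q => (z q : ℝ)) p - 1) -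
      ∑ p, excess (1 - W p p + γ) (z p + c p - 1) ≤ -μ := by
  have hrow := (mem_doublyStochastic_iff_mem_rowStochastic_and_mem_colStochastic.1 hW).1
  calc _ = ∑ p, (excess (1 - W p p + γ) (c p + (W *ᵥ fun q => (z q : ℝ)) p - 1) -
        excess (1 - W p p + γ) (z p + c p - 1)) := (sum_sub_distrib ..).symm
    _ ≤ ∑ p, ((W *ᵥ overshoot z) p - overshoot z p - if p = i then μ else 0) := by
      refine sum_le_sum fun p _ => ?_
      split_ifs with hp
      · subst hp
        linarith [excess_step_le_sub hrow hγ (hdiag p) (hc0 p) (hc1 p) hi hj hμγ hμ]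
      · linarith [excess_step_le hrow hγ (z := z) (hdiag p) (hc0 p) (hc1 p).le]
    _ = -μ := by
      rw [sum_sub_distrib, sum_sub_distrib, sum_mulVec_of_mem_doublyStochastic hW,
        sum_ite_eq' univ i, if_pos (mem_univ i)]
      ring

section Trajectory

variable {n : ℕ} (hn : 0 < n) (x : ℕ → Fin n → ℝ) (k : ℕ)

noncomputable def level (p : Fin n) : ℕ := (⌊x k p⌋ - mfun hn x k).toNat

variable {x} {k}

lemma mfun_le_floor (p : Fin n) : mfun hn x k ≤ ⌊x k p⌋ := inf'_le _ (mem_univ p)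

lemma floor_eq_mfun_add_level (p : Fin n) : ⌊x k p⌋ = mfun hn x k + level hn x k p := by
  rw [level, Int.toNat_of_nonneg (sub_nonneg.2 (mfun_le_floor hn p))]
  ring

lemma sub_mfun_sub_one_eq (p : Fin n) :
    x k p - mfun hn x k - 1 = level hn x k p + Int.fract (x k p) - 1 := by
  have h := congrArg (fun z : ℤ => (z : ℝ)) (floor_eq_mfun_add_level hn (x := x) (k := k) p)
  push_cast at h
  linarith [Int.floor_add_fract (x k p)]

lemma Vfun_eq (W : Matrix (Fin n) (Fin n) ℝ) (γ : ℝ) :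
    Vfun hn W γ x k = ∑ p, excess (1 - W p p + γ) (level hn x k p + Int.fract (x k p) - 1) := by
  simp only [Vfun, excess, alpha, sub_mfun_sub_one_eq]

lemma Traj.sub_mfun_sub_one_eq_succ {W : Matrix (Fin n) (Fin n) ℝ} (hx : Traj W x)
    (hrow : ∀ p, ∑ q, W p q = 1) (p : Fin n) :
    x (k + 1) p - mfun hn x k - 1 =
      Int.fract (x k p) + (W *ᵥ fun q => (level hn x k q : ℝ)) p - 1 := by
  have h : ∑ q, W p q * (⌊x k q⌋ : ℝ) =
      mfun hn x k + (W *ᵥ fun q => (level hn x k q : ℝ)) p := by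
    simp only [floor_eq_mfun_add_level hn, Int.cast_add, Int.cast_natCast, mul_add,
      sum_add_distrib, ← sum_mul, hrow p, one_mul]
    rfl
  rw [hx k p, h, ← Int.self_sub_floor]
  ring

lemma Traj.Vfun_succ_eq {W : Matrix (Fin n) (Fin n) ℝ} (hx : Traj W x)
    (hrow : ∀ p, ∑ q, W p q = 1) (hm : mfun hn x (k + 1) = mfun hn x k) (γ : ℝ) :
    Vfun hn W γ x (k + 1) = ∑ p, excess (1 - W p p + γ)
      (Int.fract (x k p) + (W *ᵥ fun q => (level hn x k q : ℝ)) p - 1) := by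
  simp only [Vfun, excess, alpha, hm, hx.sub_mfun_sub_one_eq_succ hn hrow]

lemma level_eq_zero_of_lt {p : Fin n} (h : x k p < mfun hn x k + 1) : level hn x k p = 0 := by
  rw [level, Int.toNat_eq_zero, sub_nonpos, ← Int.lt_add_one_iff, Int.floor_lt]
  exact_mod_cast h

lemma GammaSetup.alpha_add_le_of_lt {W : Matrix (Fin n) (Fin n) ℝ} {γ : ℝ}
    (hγ : GammaSetup W x γ) {i : Fin n} (hw : W i i ≤ 1)
    (hi : (mfun hn x k : ℝ) + 1 + alpha W γ i < x k i) :
    alpha W γ i + γ ≤ level hn x k i + Int.fract (x k i) - 1 := by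
  obtain ⟨hup, -, hc, hdiag⟩ := hγ.2 i k
  rw [Int.self_sub_floor] at hup hc
  have h : alpha W γ i < level hn x k i + Int.fract (x k i) - 1 := by
    rw [← sub_mfun_sub_one_eq hn]; linarith
  unfold alpha at h ⊢
  generalize level hn x k i = z at h ⊢
  obtain rfl | rfl | h2 : z = 0 ∨ z = 1 ∨ 2 ≤ z := by omega
  · rw [Nat.cast_zero] at h; linarith [hγ.1]
  · rw [Nat.cast_one] at h ⊢; linarith [hγ.1, hup (by linarith [hγ.1])]
  · have : (2 : ℝ) ≤ z := by exact_mod_cast h2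
    linarith [Int.fract_nonneg (x k i)]

end Trajectory

lemma Assumption1.mem_doublyStochastic {n : ℕ} {G : SimpleGraph (Fin n)}
    {W : Matrix (Fin n) (Fin n) ℝ} (hW : Assumption1 G W) :
    W ∈ doublyStochastic ℝ (Fin n) := by
  obtain ⟨hsym, hnn, hrow, -⟩ := hW
  exact mem_doublyStochastic_iff_sum.2
    ⟨hnn, hrow, fun j => (sum_congr rfl fun i _ => hsym i j).trans (hrow j)⟩

lemma deltaMin_le {n : ℕ} {G : SimpleGraph (Fin n)} {W : Matrix (Fin n) (Fin n) ℝ}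
    (hW : ∀ p q, 0 ≤ W p q) {i j : Fin n} (h : G.Adj i j) : deltaMin G W ≤ W i j :=
  csInf_le ⟨0, by rintro _ ⟨p, q, -, rfl⟩; exact hW p q⟩ ⟨i, j, h, rfl⟩

theorem situation_S1_decrease_general {n : ℕ} (hn : 1 < n)
    (G : SimpleGraph (Fin n))
    (W : Matrix (Fin n) (Fin n) ℝ) (hW : Assumption1 G W)
    (x : ℕ → Fin n → ℝ) (hx : Traj W x)
    (γ : ℝ) (hγ : GammaSetup W x γ)
    (k : ℕ)
    (hm : mfun (Nat.zero_lt_one.trans hn) x (k + 1) = mfun (Nat.zero_lt_one.trans hn) x k)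
    (i j : Fin n) (hadj : G.Adj i j)
    (hi : (mfun (Nat.zero_lt_one.trans hn) x k : ℝ) + 1 + alpha W γ i < x k i)
    (hj : x k j < (mfun (Nat.zero_lt_one.trans hn) x k : ℝ) + 1) :
    Vfun (Nat.zero_lt_one.trans hn) W γ x (k + 1) -
      Vfun (Nat.zero_lt_one.trans hn) W γ x k ≤ -min γ (deltaMin G W) := by
  have hn0 : 0 < n := Nat.zero_lt_one.trans hn
  have hWds := hW.mem_doublyStochastic
  have hdiag : ∀ p, 1 / 2 + 2 * γ ≤ W p p := fun p => by linarith [(hγ.2 p k).2.2.2]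
  have hi' := hγ.alpha_add_le_of_lt hn0 (le_one_of_mem_doublyStochastic hWds) hi
  have hμ : min γ (deltaMin G W) ≤ W i j :=
    (min_le_right _ _).trans (deltaMin_le (fun _ _ => nonneg_of_mem_doublyStochastic hWds) hadj)
  rw [hx.Vfun_succ_eq hn0 (sum_row_of_mem_doublyStochastic hWds) hm, Vfun_eq]
  exact sum_excess_step_le hWds hγ.1.le hdiag (fun p => Int.fract_nonneg _)
    (fun p => Int.fract_lt_one _) hi' (level_eq_zero_of_lt hn0 hj) (min_le_left _ _) hμ

/-- Situation S1: an edge between a node in `X4 ∪ X5 ∪ X6` and a node in `X1 ∪ X2`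
forces a strict Lyapunov decrease of at least `min{γ, δ}`. -/
theorem situation_S1_decrease {n : ℕ} (hn : 1 < n)
    (G : SimpleGraph (Fin n)) (hG : G.Connected)
    (W : Matrix (Fin n) (Fin n) ℝ) (hW : Assumption1 G W)
    (x : ℕ → Fin n → ℝ) (hx : Traj W x)
    (γ : ℝ) (hγ : GammaSetup W x γ)
    (k : ℕ)
    (hm : mfun (Nat.zero_lt_one.trans hn) x (k + 1) = mfun (Nat.zero_lt_one.trans hn) x k)
    (i j : Fin n) (hadj : G.Adj i j)
    (hi : (mfun (Nat.zero_lt_one.trans hn) x k : ℝ) + 1 + alpha W γ i < x k i)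
    (hj : x k j < (mfun (Nat.zero_lt_one.trans hn) x k : ℝ) + 1) :
    Vfun (Nat.zero_lt_one.trans hn) W γ x (k + 1) -
      Vfun (Nat.zero_lt_one.trans hn) W γ x k ≤ -min γ (deltaMin G W) :=
  situation_S1_decrease_general hn G W hW x hx γ hγ k hm i j hadj hi hj
end
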